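/- Lemma 4.1 (comparison functions for the elliptic approximation): Let m ≥ 2, R > 0, and let Ω ⊂ ℝ^m be a bounded domain contained in the ball B_R of radius R centered at the origin. Let F⃗ ∈ C¹(Ω) be a vector field such that all components F_I and all partial derivatives ∂_I F_J are bounded on Ω, and let ε₀ > 0. Then there exist κ > 0 and κ′ > 0 (depending only on ε₀, R, sup_Ω |F_I| and sup_Ω |∂_I F_J|) such that for every ε with 0 < ε ≤ ε₀, the smooth functions w(x) = e^{x₁+κR} + e^{x₂+κR} and w′(x) = −e^{x₁+κ′R} − e^{x₂+κ′R} satisfy Q_ε w(x) > 0 and Q_ε w′(x) < 0 at every point x ∈ Ω. -/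

import Mathlib

open MeasureTheory
open scoped RealInnerProductSpace ENNReal

/-- The elliptic approximating operator
`Q_ε v = div((∇v + F⃗)/√(ε² + |∇v + F⃗|²))`, the classical divergence of the vector
field `(∇v + F⃗)/√(ε² + |∇v + F⃗|²)`. -/
noncomputable def Qeps {m : ℕ} (ε : ℝ)
    (F : EuclideanSpace ℝ (Fin m) → EuclideanSpace ℝ (Fin m))
    (v : EuclideanSpace ℝ (Fin m) → ℝ) (x : EuclideanSpace ℝ (Fin m)) : ℝ :=
  ∑ i, fderiv ℝ
    (fun y => (Real.sqrt (ε ^ 2 + ‖gradient v y + F y‖ ^ 2))⁻¹ • (gradient v y + F y))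
    x (EuclideanSpace.single i 1) i

namespace CompAux

variable {m : ℕ}

local notation "E" => EuclideanSpace ℝ (Fin m)

lemma hasFDerivAt_exp_coord (i : Fin m) (c η : ℝ) (y : E) :
    HasFDerivAt (fun y : E => η * Real.exp (y i + c))
      ((η * Real.exp (y i + c)) • (EuclideanSpace.proj i : E →L[ℝ] ℝ)) y := by
  have h1 : HasFDerivAt (fun y : E => y i + c) (EuclideanSpace.proj i : E →L[ℝ] ℝ) y := by
    exact (EuclideanSpace.proj (𝕜 := ℝ) i).hasFDerivAt.add_const c
  have h3 := ((Real.hasDerivAt_exp (y i + c)).comp_hasFDerivAt y h1).const_mul η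
  refine h3.congr_fderiv ?_
  ext u
  simp only [ContinuousLinearMap.smul_apply, ContinuousLinearMap.coe_smul', Pi.smul_apply,
    smul_eq_mul]
  ring_nf

lemma gradient_two_exp (hm : 2 ≤ m) (c η : ℝ) (y : E) :
    HasGradientAt (fun y : E =>
        η * Real.exp (y ⟨0, Nat.lt_of_lt_of_le (by norm_num : 0 < 2) hm⟩ + c) + η * Real.exp (y ⟨1, Nat.lt_of_lt_of_le (by norm_num : 1 < 2) hm⟩ + c))
      ((η * Real.exp (y ⟨0, Nat.lt_of_lt_of_le (by norm_num : 0 < 2) hm⟩ + c)) • EuclideanSpace.single ⟨0, Nat.lt_of_lt_of_le (by norm_num : 0 < 2) hm⟩ (1:ℝ)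
        + (η * Real.exp (y ⟨1, Nat.lt_of_lt_of_le (by norm_num : 1 < 2) hm⟩ + c)) • EuclideanSpace.single ⟨1, Nat.lt_of_lt_of_le (by norm_num : 1 < 2) hm⟩ (1:ℝ)) y := by
  set i0 : Fin m := ⟨0, Nat.lt_of_lt_of_le (by norm_num : 0 < 2) hm⟩
  set i1 : Fin m := ⟨1, Nat.lt_of_lt_of_le (by norm_num : 1 < 2) hm⟩
  rw [hasGradientAt_iff_hasFDerivAt]
  have hd := (hasFDerivAt_exp_coord i0 c η y).add (hasFDerivAt_exp_coord i1 c η y)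
  refine hd.congr_fderiv ?_
  ext u
  simp [InnerProductSpace.toDual_apply_apply, inner_add_left, real_inner_smul_left,
    EuclideanSpace.inner_single_left]

lemma qeps_eval (ε : ℝ) (hε : 0 < ε) (F : E → E) (v : E → ℝ) (x : E)
    (gv : E → E) (hgrad : ∀ y, gradient v y = gv y)
    (K : E →L[ℝ] E) (hg' : HasFDerivAt (fun y => gv y + F y) K x) :
    Qeps ε F v x = ∑ i,
      ((Real.sqrt (ε^2 + ⟪gv x + F x, gv x + F x⟫))⁻¹ * (K (EuclideanSpace.single i 1) i)
       - ⟪gv x + F x, K (EuclideanSpace.single i 1)⟫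
          / (Real.sqrt (ε^2 + ⟪gv x + F x, gv x + F x⟫))^3 * ((gv x + F x) i)) := by
  set g : E := gv x + F x with hgdef
  have hσpos : 0 < ε^2 + ⟪g, g⟫ := by
    have h0 : (0:ℝ) ≤ ⟪g, g⟫ := real_inner_self_nonneg
    nlinarith
  set s := Real.sqrt (ε^2 + ⟪g, g⟫) with hsdef
  have hs : 0 < s := Real.sqrt_pos.2 hσpos
  have hσ' : HasFDerivAt (fun y => ε^2 + ⟪gv y + F y, gv y + F y⟫)
      ((fderivInnerCLM ℝ (g, g)).comp (K.prod K)) x := (hg'.inner ℝ hg').const_add (ε^2)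
  have hinv : HasDerivAt (fun t : ℝ => (Real.sqrt t)⁻¹) (-(1/(2*s))/s^2) (ε^2 + ⟪g, g⟫) :=
    (Real.hasDerivAt_sqrt hσpos.ne').inv hs.ne'
  have hc : HasFDerivAt (fun y => (Real.sqrt (ε^2 + ⟪gv y + F y, gv y + F y⟫))⁻¹)
      ((-(1/(2*s))/s^2) • ((fderivInnerCLM ℝ (g, g)).comp (K.prod K))) x :=
    HasDerivAt.comp_hasFDerivAt (f := fun y => ε^2 + ⟪gv y + F y, gv y + F y⟫) x hinv hσ'
  have hΦ : HasFDerivAt (fun y => (Real.sqrt (ε^2 + ⟪gv y + F y, gv y + F y⟫))⁻¹ • (gv y + F y)) _ x :=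
    hc.smul hg'
  have hfun : (fun y => (Real.sqrt (ε ^ 2 + ‖gradient v y + F y‖ ^ 2))⁻¹ • (gradient v y + F y))
      = fun y => (Real.sqrt (ε^2 + ⟪gv y + F y, gv y + F y⟫))⁻¹ • (gv y + F y) := by
    funext y
    rw [hgrad y, real_inner_self_eq_norm_sq]
  unfold Qeps
  rw [hfun, hΦ.fderiv]
  rw [← hgdef]
  refine Finset.sum_congr rfl fun i _ => ?_
  simp only [ContinuousLinearMap.add_apply, ContinuousLinearMap.coe_smul', Pi.smul_apply,
    ContinuousLinearMap.smulRight_apply, ContinuousLinearMap.comp_apply,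
    ContinuousLinearMap.prod_apply, fderivInnerCLM_apply, ContinuousLinearMap.smul_apply,
    PiLp.add_apply, PiLp.smul_apply, smul_eq_mul]
  rw [real_inner_comm (K (EuclideanSpace.single i 1)) g, ← hsdef]
  set q := ⟪g, K (EuclideanSpace.single i 1)⟫ with hq
  field_simp
  ring


set_option maxHeartbeats 1000000 in
lemma numeric (mR ε ε₀ M₀ M₁ C a b s g0sq g1sq T₁ T₂ gg e2 η : ℝ)
    (hm2 : 2 ≤ mR) (hε : 0 < ε) (hεε₀ : ε ≤ ε₀) (hε₀ : 0 < ε₀)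
    (hM₀ : 0 < M₀) (hM₁ : 0 < M₁)
    (hC1 : 1 ≤ C) (hC2 : 2 * M₀ ≤ C)
    (hC3 : 4 * mR * M₁ * ε₀ ^ 2 + 16 * mR ^ 2 * M₁ * (e2 * e2) + 1 ≤ C)
    (he2 : 1 ≤ e2)
    (ha : C ≤ a) (hb : C ≤ b)
    (hg0 : (C - M₀)^2 ≤ g0sq) (hg1 : (C - M₀)^2 ≤ g1sq)
    (hgg0 : 0 ≤ gg) (hggB : gg ≤ mR * (e2 * C + M₀)^2)
    (hsum2 : g0sq + g1sq ≤ gg)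
    (hs2 : s^2 = ε^2 + gg)
    (hT1 : |T₁| ≤ mR * M₁) (hT2 : |T₂| ≤ mR * M₁ * gg)
    (hηa : |η| = 1) :
    0 < a * (s^2 - g0sq) + b * (s^2 - g1sq) + η * (s^2 * T₁ - T₂) := by
  have hCpos : (0:ℝ) < C := lt_of_lt_of_le one_pos hC1
  have hCM : 0 < C - M₀ := by linarith
  have hε2 : 0 ≤ ε^2 := sq_nonneg ε
  have hA1 : (C - M₀)^2 ≤ s^2 - g0sq := by linarith
  have hA2 : (C - M₀)^2 ≤ s^2 - g1sq := by linarith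
  have hmain1 : C * (C - M₀)^2 ≤ a * (s^2 - g0sq) :=
    mul_le_mul ha hA1 (sq_nonneg _) (by linarith)
  have hmain2 : C * (C - M₀)^2 ≤ b * (s^2 - g1sq) :=
    mul_le_mul hb hA2 (sq_nonneg _) (by linarith)
  have hs2pos : 0 < s^2 := by nlinarith [pow_pos hε 2]
  have herr : |η * (s^2 * T₁ - T₂)| ≤ 2 * mR * M₁ * s^2 := by
    rw [abs_mul, hηa, one_mul]
    calc |s^2 * T₁ - T₂| ≤ |s^2 * T₁| + |T₂| := abs_sub _ _
      _ ≤ s^2 * (mR * M₁) + mR * M₁ * gg := by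
          rw [abs_mul, abs_of_pos hs2pos]
          exact add_le_add (mul_le_mul_of_nonneg_left hT1 hs2pos.le) hT2
      _ ≤ 2 * mR * M₁ * s^2 := by
          have hggs : gg ≤ s^2 := by linarith
          have h3 : mR * M₁ * gg ≤ mR * M₁ * s^2 :=
            mul_le_mul_of_nonneg_left hggs (mul_nonneg (by linarith) hM₁.le)
          linarith
  have hBM : (e2 * C + M₀)^2 ≤ 4 * (e2 * e2) * C^2 := by
    have hM0C : M₀ ≤ e2 * C := by nlinarith [mul_le_mul_of_nonneg_left he2 hCpos.le]
    have h1 : e2 * C + M₀ ≤ 2 * (e2 * C) := by linarith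
    calc (e2 * C + M₀)^2 ≤ (2 * (e2 * C))^2 := by
          refine pow_le_pow_left₀ (by positivity) h1 2
      _ = 4 * (e2 * e2) * C^2 := by ring
  have hs2up : s^2 ≤ ε₀^2 + mR * (4 * (e2 * e2) * C^2) := by
    have h2 : mR * (e2 * C + M₀)^2 ≤ mR * (4 * (e2 * e2) * C^2) :=
      mul_le_mul_of_nonneg_left hBM (by linarith)
    nlinarith
  have hnum : 2 * mR * M₁ * s^2 < 2 * C * (C - M₀)^2 := by
    have hCM2 : C^2 / 4 ≤ (C - M₀)^2 := by
      have h4 : C / 2 ≤ C - M₀ := by linarith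
      calc C^2 / 4 = (C / 2)^2 := by ring
        _ ≤ (C - M₀)^2 := by exact pow_le_pow_left₀ (by linarith) h4 2
    have hC2 : (1:ℝ) ≤ C^2 := by nlinarith [mul_le_mul hC1 hC1 (by norm_num : (0:ℝ) ≤ 1) (by linarith : (0:ℝ) ≤ C)]
    have hkey : 4 * mR * M₁ * ε₀^2 + 16 * mR^2 * M₁ * (e2 * e2) * C^2 < C^3 := by
      have h1 : (4 * mR * M₁ * ε₀ ^ 2 + 16 * mR ^ 2 * M₁ * (e2 * e2)) * C^2 < C * C^2 := by
        have := mul_lt_mul_of_pos_right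
          (show 4 * mR * M₁ * ε₀ ^ 2 + 16 * mR ^ 2 * M₁ * (e2 * e2) < C by linarith)
          (show (0:ℝ) < C^2 by positivity)
        linarith
      have ht : 0 ≤ 4 * mR * M₁ * ε₀^2 :=
        mul_nonneg (mul_nonneg (by linarith) hM₁.le) (sq_nonneg ε₀)
      have h2 : 4 * mR * M₁ * ε₀^2 ≤ 4 * mR * M₁ * ε₀^2 * C^2 := by
        nlinarith [mul_le_mul_of_nonneg_left hC2 ht]
      nlinarith
    calc 2 * mR * M₁ * s^2 ≤ 2 * mR * M₁ * (ε₀^2 + mR * (4 * (e2 * e2) * C^2)) := by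
          exact mul_le_mul_of_nonneg_left hs2up
            (mul_nonneg (by linarith) hM₁.le)
      _ = (4 * mR * M₁ * ε₀^2 + 16 * mR^2 * M₁ * (e2 * e2) * C^2) / 2 := by ring
      _ < C^3 / 2 := by linarith
      _ ≤ 2 * C * (C - M₀)^2 := by
          nlinarith [mul_le_mul_of_nonneg_left hCM2 (show (0:ℝ) ≤ 2 * C by linarith)]
  have habs := abs_le.mp herr
  linarith [hmain1, hmain2, habs.1, hnum]

set_option maxHeartbeats 1000000 in
lemma key {m : ℕ} (hm : 2 ≤ m) (R ε₀ M₀ M₁ : ℝ) (hR : 0 < R) (hε₀ : 0 < ε₀)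
    (hM₀ : 0 < M₀) (hM₁ : 0 < M₁)
    (C : ℝ) (hC1 : 1 ≤ C) (hC2 : 2 * M₀ ≤ C)
    (hC3 : 4 * m * M₁ * ε₀ ^ 2 + 16 * (m : ℝ) ^ 2 * M₁ * (Real.exp (2*R) * Real.exp (2*R)) + 1 ≤ C)
    (Ω : Set (EuclideanSpace ℝ (Fin m))) (hΩ : IsOpen Ω) (hΩR : Ω ⊆ Metric.ball 0 R)
    (F : EuclideanSpace ℝ (Fin m) → EuclideanSpace ℝ (Fin m))
    (hF : ContDiffOn ℝ 1 F Ω)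
    (hF0 : ∀ x ∈ Ω, ∀ i, |F x i| ≤ M₀)
    (hF1 : ∀ x ∈ Ω, ∀ i j, |fderiv ℝ (fun y => F y i) x (EuclideanSpace.single j 1)| ≤ M₁)
    (ε : ℝ) (hε : 0 < ε) (hεε₀ : ε ≤ ε₀)
    (x : EuclideanSpace ℝ (Fin m)) (hx : x ∈ Ω)
    (η : ℝ) (hη : η = 1 ∨ η = -1) :
    0 < η * Qeps ε F (fun y => η * Real.exp (y ⟨0, Nat.lt_of_lt_of_le (by norm_num : 0 < 2) hm⟩ + (R + Real.log C)) +
        η * Real.exp (y ⟨1, Nat.lt_of_lt_of_le (by norm_num : 1 < 2) hm⟩ + (R + Real.log C))) x := by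
  have hη2 : η ^ 2 = 1 := by rcases hη with h | h <;> rw [h] <;> norm_num
  have hηa : |η| = 1 := by rcases hη with h | h <;> rw [h] <;> norm_num
  have hCpos : (0:ℝ) < C := lt_of_lt_of_le one_pos hC1
  set i0 : Fin m := ⟨0, Nat.lt_of_lt_of_le (by norm_num : 0 < 2) hm⟩ with hi0def
  set i1 : Fin m := ⟨1, Nat.lt_of_lt_of_le (by norm_num : 1 < 2) hm⟩ with hi1def
  have hi01 : i0 ≠ i1 := by simp [hi0def, hi1def, Fin.ext_iff]
  set c : ℝ := R + Real.log C with hcdef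
  show 0 < η * Qeps ε F (fun y => η * Real.exp (y i0 + c) + η * Real.exp (y i1 + c)) x
  set B : ℝ := Real.exp (2*R) * C with hBdef
  -- coordinate bounds
  have hxnorm : ‖x‖ < R := by
    have := hΩR hx
    rwa [Metric.mem_ball, dist_zero_right] at this
  have hxi : ∀ i : Fin m, |x i| < R := by
    intro i
    refine lt_of_le_of_lt ?_ hxnorm
    have h := abs_real_inner_le_norm (EuclideanSpace.single i (1:ℝ)) x
    simpa [EuclideanSpace.inner_single_left, EuclideanSpace.norm_single] using h
  have hexp1 : (1:ℝ) ≤ Real.exp (2*R) := Real.one_le_exp (by linarith)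
  have hab : ∀ i : Fin m, C ≤ Real.exp (x i + c) ∧ Real.exp (x i + c) ≤ B := by
    intro i
    have hxiR := abs_lt.mp (hxi i)
    have h1 : Real.exp (x i + c) = Real.exp (x i + R) * C := by
      rw [hcdef, show x i + (R + Real.log C) = (x i + R) + Real.log C by ring,
        Real.exp_add, Real.exp_log hCpos]
    constructor
    · rw [h1]
      have h2 := Real.one_le_exp (show (0:ℝ) ≤ x i + R by linarith)
      nlinarith
    · rw [h1, hBdef]
      have h2 := Real.exp_le_exp.2 (show x i + R ≤ 2*R by linarith)
      nlinarith [Real.exp_pos (x i + R)]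
  set a : ℝ := Real.exp (x i0 + c) with hadef
  set b : ℝ := Real.exp (x i1 + c) with hbdef
  have ha := hab i0
  have hb := hab i1
  have hapos : 0 < a := Real.exp_pos _
  have hbpos : 0 < b := Real.exp_pos _
  -- F differentiability and bounds
  have hFd : DifferentiableAt ℝ F x := (hF.contDiffAt (hΩ.mem_nhds hx)).differentiableAt one_ne_zero
  set F' := fderiv ℝ F x with hF'def
  have hF'c : ∀ i j : Fin m, |(F' (EuclideanSpace.single j 1)) i| ≤ M₁ := by
    intro i j
    have hcomp : (F' (EuclideanSpace.single j 1)) i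
        = fderiv ℝ (fun y => F y i) x (EuclideanSpace.single j 1) := by
      have h := ((EuclideanSpace.proj (𝕜 := ℝ) i).hasFDerivAt.comp x hFd.hasFDerivAt).fderiv
      rw [show (fun y => F y i) = (EuclideanSpace.proj (𝕜 := ℝ) i) ∘ F from rfl, h]
      rfl
    rw [hcomp]
    exact hF1 x hx i j
  have hFxb : ∀ i, |F x i| ≤ M₀ := hF0 x hx
  -- gradient
  set v : EuclideanSpace ℝ (Fin m) → ℝ :=
    fun y => η * Real.exp (y i0 + c) + η * Real.exp (y i1 + c) with hvdef
  set gv : EuclideanSpace ℝ (Fin m) → EuclideanSpace ℝ (Fin m) :=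
    fun y => (η * Real.exp (y i0 + c)) • EuclideanSpace.single i0 (1:ℝ)
      + (η * Real.exp (y i1 + c)) • EuclideanSpace.single i1 (1:ℝ) with hgvdef
  have hgrad : ∀ y, gradient v y = gv y := fun y => (gradient_two_exp hm c η y).gradient
  -- derivative of gv
  set H : EuclideanSpace ℝ (Fin m) →L[ℝ] EuclideanSpace ℝ (Fin m) :=
    (((η * a) • (EuclideanSpace.proj i0 : EuclideanSpace ℝ (Fin m) →L[ℝ] ℝ)).smulRight
        (EuclideanSpace.single i0 (1:ℝ)))
      + (((η * b) • (EuclideanSpace.proj i1 : EuclideanSpace ℝ (Fin m) →L[ℝ] ℝ)).smulRight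
        (EuclideanSpace.single i1 (1:ℝ))) with hHdef
  have hgv' : HasFDerivAt gv H x :=
    ((hasFDerivAt_exp_coord i0 c η x).smul_const _).add
      ((hasFDerivAt_exp_coord i1 c η x).smul_const _)
  have hg' : HasFDerivAt (fun y => gv y + F y) (H + F') x := hgv'.add hFd.hasFDerivAt
  set g := gv x + F x with hgdef
  -- components of g
  have hg0 : g i0 = η * a + F x i0 := by
    simp [hgdef, hgvdef, EuclideanSpace.single_apply, hi01, PiLp.add_apply, PiLp.smul_apply]
    exact Or.inl rfl
  have hg1 : g i1 = η * b + F x i1 := by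
    simp [hgdef, hgvdef, EuclideanSpace.single_apply, hi01.symm, PiLp.add_apply,
      PiLp.smul_apply]
    exact Or.inl rfl
  have hgo : ∀ i, i ≠ i0 → i ≠ i1 → g i = F x i := by
    intro i h0 h1
    simp [hgdef, hgvdef, EuclideanSpace.single_apply, h0, h1, PiLp.add_apply, PiLp.smul_apply]
  -- evaluation of H + F'
  have hHe : ∀ i j : Fin m, ((H + F') (EuclideanSpace.single j 1)) i
      = (if i0 = j then η * a else 0) * (if i0 = i then 1 else 0)
        + (if i1 = j then η * b else 0) * (if i1 = i then 1 else 0)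
        + (F' (EuclideanSpace.single j 1)) i := by
    intro i j
    simp only [ContinuousLinearMap.add_apply, PiLp.add_apply, hHdef]
    congr 1
    simp only [ContinuousLinearMap.add_apply, ContinuousLinearMap.smulRight_apply,
      ContinuousLinearMap.smul_apply, smul_eq_mul, PiLp.add_apply, PiLp.smul_apply,
      EuclideanSpace.single_apply]
    simp [EuclideanSpace.proj, mul_ite, ite_mul, EuclideanSpace.single_apply]
    simp [eq_comm]
  -- the scalar s
  have hgg0 : (0:ℝ) ≤ ⟪g, g⟫ := real_inner_self_nonneg
  have hσpos : 0 < ε^2 + ⟪g, g⟫ := by nlinarith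
  set s := Real.sqrt (ε^2 + ⟪g, g⟫) with hsdef
  have hs : 0 < s := Real.sqrt_pos.2 hσpos
  have hs2 : s^2 = ε^2 + ⟪g, g⟫ := Real.sq_sqrt hσpos.le
  -- the sums
  set T₁ : ℝ := ∑ i, (F' (EuclideanSpace.single i 1)) i with hT₁def
  set T₂ : ℝ := ∑ j, ⟪g, F' (EuclideanSpace.single j 1)⟫ * g j with hT₂def
  have hS1 : ∑ i, ((H + F') (EuclideanSpace.single i 1)) i = η * a + η * b + T₁ := by
    rw [Finset.sum_congr rfl fun i _ => hHe i i]
    rw [Finset.sum_add_distrib, Finset.sum_add_distrib]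
    congr 1
    · congr 1
      · rw [Finset.sum_congr rfl (fun i _ => show
          (if i0 = i then η * a else 0) * (if i0 = i then 1 else 0) = if i0 = i then η * a else 0
            by split_ifs <;> ring)]
        simp
      · rw [Finset.sum_congr rfl (fun i _ => show
          (if i1 = i then η * b else 0) * (if i1 = i then 1 else 0) = if i1 = i then η * b else 0
            by split_ifs <;> ring)]
        simp
  have hinnerH : ∀ j : Fin m, ⟪g, (H + F') (EuclideanSpace.single j 1)⟫
      = (if i0 = j then η * a else 0) * g i0 + (if i1 = j then η * b else 0) * g i1
        + ⟪g, F' (EuclideanSpace.single j 1)⟫ := by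
    intro j
    have hrepr : (H + F') (EuclideanSpace.single j 1)
        = ((if i0 = j then η * a else 0) • EuclideanSpace.single i0 (1:ℝ))
          + ((if i1 = j then η * b else 0) • EuclideanSpace.single i1 (1:ℝ))
          + F' (EuclideanSpace.single j 1) := by
      refine PiLp.ext fun i => ?_
      rw [hHe i j]
      rcases eq_or_ne i i0 with h0 | h0
      · rw [h0]
        simp only [PiLp.add_apply, PiLp.smul_apply, EuclideanSpace.single_apply, smul_eq_mul,
          if_pos rfl, if_neg (Ne.symm hi01), if_neg hi01]
        all_goals split_ifs <;> ring
      · rcases eq_or_ne i i1 with h1 | h1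
        · rw [h1]
          simp only [PiLp.add_apply, PiLp.smul_apply, EuclideanSpace.single_apply, smul_eq_mul,
            if_pos rfl, if_neg (Ne.symm hi01), if_neg hi01]
          all_goals split_ifs <;> ring
        · simp only [PiLp.add_apply, PiLp.smul_apply, EuclideanSpace.single_apply, smul_eq_mul,
            if_neg (Ne.symm h0), if_neg (Ne.symm h1), if_neg h0, if_neg h1]
          all_goals ring
    rw [hrepr]
    simp only [inner_add_right, real_inner_smul_right, EuclideanSpace.inner_single_right]
    simp only [conj_trivial, mul_one]
    ring
  have hS2 : ∑ j, ⟪g, (H + F') (EuclideanSpace.single j 1)⟫ * g j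
      = η * a * (g i0)^2 + η * b * (g i1)^2 + T₂ := by
    rw [Finset.sum_congr rfl fun j _ => by rw [hinnerH j]]
    simp only [add_mul]
    rw [Finset.sum_add_distrib, Finset.sum_add_distrib]
    congr 1
    · congr 1
      · rw [Finset.sum_congr rfl (fun j _ => show
          (if i0 = j then η * a else 0) * g i0 * g j
            = if i0 = j then η * a * (g i0) * (g j) else 0 by split_ifs <;> ring)]
        rw [Finset.sum_ite_eq]
        simp only [Finset.mem_univ, if_true]
        ring
      · rw [Finset.sum_congr rfl (fun j _ => show
          (if i1 = j then η * b else 0) * g i1 * g j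
            = if i1 = j then η * b * (g i1) * (g j) else 0 by split_ifs <;> ring)]
        rw [Finset.sum_ite_eq]
        simp only [Finset.mem_univ, if_true]
        ring
  -- the Qeps formula
  have hQ := qeps_eval ε hε F v x gv hgrad (H + F') hg'
  rw [← hgdef, ← hsdef] at hQ
  have hQ2 : Qeps ε F v x = s⁻¹ * (η * a + η * b + T₁)
      - (η * a * (g i0)^2 + η * b * (g i1)^2 + T₂) / s^3 := by
    rw [hQ, Finset.sum_sub_distrib, ← Finset.mul_sum, hS1]
    congr 1
    rw [Finset.sum_congr rfl (fun j _ => div_mul_eq_mul_div _ _ _), ← Finset.sum_div, hS2]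
  -- bounds
  have hcard : (Finset.univ : Finset (Fin m)).card = m := by simp
  have hT1b : |T₁| ≤ m * M₁ := by
    calc |T₁| ≤ ∑ i, |(F' (EuclideanSpace.single i 1)) i| := Finset.abs_sum_le_sum_abs _ _
    _ ≤ ∑ _i : Fin m, M₁ := Finset.sum_le_sum fun i _ => hF'c i i
    _ = m * M₁ := by rw [Finset.sum_const, hcard]; simp [nsmul_eq_mul]
  have hgg : ⟪g, g⟫ = ∑ i, (g i)^2 := by
    rw [PiLp.inner_apply]
    refine Finset.sum_congr rfl fun i _ => ?_
    simp [RCLike.inner_apply, conj_trivial, sq]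
  have hinnerFj : ∀ j, |⟪g, F' (EuclideanSpace.single j 1)⟫| ≤ M₁ * ∑ i, |g i| := by
    intro j
    rw [PiLp.inner_apply]
    calc |∑ i, ⟪g i, (F' (EuclideanSpace.single j 1)) i⟫|
        ≤ ∑ i, |⟪g i, (F' (EuclideanSpace.single j 1)) i⟫| := Finset.abs_sum_le_sum_abs _ _
      _ ≤ ∑ i, M₁ * |g i| := by
          refine Finset.sum_le_sum fun i _ => ?_
          simp only [RCLike.inner_apply, conj_trivial]
          rw [abs_mul]
          exact mul_le_mul_of_nonneg_right (hF'c i j) (abs_nonneg _)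
      _ = M₁ * ∑ i, |g i| := by rw [Finset.mul_sum]
  have hSg2 : (∑ i, |g i|)^2 ≤ m * ⟪g, g⟫ := by
    have h := sq_sum_le_card_mul_sum_sq (s := (Finset.univ : Finset (Fin m)))
      (f := fun i => |g i|)
    rw [hcard] at h
    calc (∑ i, |g i|)^2 ≤ m * ∑ i, |g i|^2 := by exact_mod_cast h
      _ = m * ⟪g, g⟫ := by
          rw [hgg]; congr 1; exact Finset.sum_congr rfl fun i _ => sq_abs _
  have hT2b : |T₂| ≤ m * M₁ * ⟪g, g⟫ := by
    have hSg : (0:ℝ) ≤ ∑ i, |g i| := Finset.sum_nonneg fun i _ => abs_nonneg _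
    calc |T₂| ≤ ∑ j, |⟪g, F' (EuclideanSpace.single j 1)⟫ * g j| :=
          Finset.abs_sum_le_sum_abs _ _
      _ ≤ ∑ j, (M₁ * ∑ i, |g i|) * |g j| := by
          refine Finset.sum_le_sum fun j _ => ?_
          rw [abs_mul]
          exact mul_le_mul_of_nonneg_right (hinnerFj j) (abs_nonneg _)
      _ = M₁ * (∑ i, |g i|)^2 := by rw [← Finset.mul_sum]; ring
      _ ≤ M₁ * (m * ⟪g, g⟫) := mul_le_mul_of_nonneg_left hSg2 hM₁.le
      _ = m * M₁ * ⟪g, g⟫ := by ring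
  -- lower bounds on (g i0)^2, (g i1)^2
  have hCM : 0 < C - M₀ := by linarith
  have hg0sq : (C - M₀)^2 ≤ (g i0)^2 := by
    have h2 : -M₀ ≤ η * F x i0 := by
      rcases hη with h | h <;> rw [h] <;> cases abs_le.mp (hFxb i0) <;> simp <;> linarith
    have h1 : (g i0)^2 = (a + η * F x i0)^2 := by
      rw [hg0]; linear_combination (a^2 - (F x i0)^2) * hη2
    rw [h1]
    have h3 : C - M₀ ≤ a + η * F x i0 := by linarith [ha.1]
    exact pow_le_pow_left₀ hCM.le h3 2
  have hg1sq : (C - M₀)^2 ≤ (g i1)^2 := by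
    have h2 : -M₀ ≤ η * F x i1 := by
      rcases hη with h | h <;> rw [h] <;> cases abs_le.mp (hFxb i1) <;> simp <;> linarith
    have h1 : (g i1)^2 = (b + η * F x i1)^2 := by
      rw [hg1]; linear_combination (b^2 - (F x i1)^2) * hη2
    rw [h1]
    have h3 : C - M₀ ≤ b + η * F x i1 := by linarith [hb.1]
    exact pow_le_pow_left₀ hCM.le h3 2
  -- upper bound on ⟪g,g⟫
  have hgabs : ∀ i, |g i| ≤ B + M₀ := by
    intro i
    by_cases h0 : i = i0
    · rw [h0, hg0]
      calc |η * a + F x i0| ≤ |η * a| + |F x i0| := abs_add_le _ _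
        _ ≤ B + M₀ := by
            rw [abs_mul, hηa, one_mul, abs_of_pos hapos]
            exact add_le_add ha.2 (hFxb i0)
    · by_cases h1 : i = i1
      · rw [h1, hg1]
        calc |η * b + F x i1| ≤ |η * b| + |F x i1| := abs_add_le _ _
          _ ≤ B + M₀ := by
              rw [abs_mul, hηa, one_mul, abs_of_pos hbpos]
              exact add_le_add hb.2 (hFxb i1)
      · rw [hgo i h0 h1]
        have hB0 : 0 < B := by positivity
        have := hFxb i
        linarith
  have hggB : ⟪g, g⟫ ≤ m * (B + M₀)^2 := by
    rw [hgg]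
    calc ∑ i, (g i)^2 ≤ ∑ _i : Fin m, (B + M₀)^2 := by
          refine Finset.sum_le_sum fun i _ => ?_
          have h1 := hgabs i
          calc (g i)^2 = |g i|^2 := (sq_abs _).symm
            _ ≤ (B + M₀)^2 := pow_le_pow_left₀ (abs_nonneg _) h1 2
      _ = m * (B + M₀)^2 := by rw [Finset.sum_const, hcard]; simp [nsmul_eq_mul]
  have hsum2 : (g i0)^2 + (g i1)^2 ≤ ⟪g, g⟫ := by
    rw [hgg]
    have h := Finset.sum_le_sum_of_subset_of_nonneg
      (Finset.subset_univ {i0, i1}) (fun i _ _ => sq_nonneg (g i))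
    rwa [Finset.sum_pair hi01] at h
  -- final rearrangement
  have hnumid : η * (s^2 * (η * a + η * b + T₁) - (η * a * (g i0)^2 + η * b * (g i1)^2 + T₂))
      = a * (s^2 - (g i0)^2) + b * (s^2 - (g i1)^2) + η * (s^2 * T₁ - T₂) := by
    linear_combination (s^2 * a + s^2 * b - a * (g i0)^2 - b * (g i1)^2) * hη2
  have hsinv : s⁻¹ = s^2 / s^3 := by
    rw [show (s:ℝ)^3 = s^2 * s by ring, div_mul_eq_div_div,
      div_self (by positivity : (s:ℝ)^2 ≠ 0), one_div]
  have hfinal : η * Qeps ε F v x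
      = (a * (s^2 - (g i0)^2) + b * (s^2 - (g i1)^2) + η * (s^2 * T₁ - T₂)) / s^3 := by
    rw [hQ2, hsinv, ← hnumid]
    ring
  rw [hfinal]
  have hs3 : 0 < s^3 := by positivity
  refine div_pos ?_ hs3
  have hm2 : (2:ℝ) ≤ (m:ℝ) := by exact_mod_cast hm
  exact numeric m ε ε₀ M₀ M₁ C a b s ((g i0)^2) ((g i1)^2) T₁ T₂ ⟪g, g⟫
    (Real.exp (2*R)) η hm2 hε hεε₀ hε₀ hM₀ hM₁ hC1 hC2 hC3 hexp1 ha.1 hb.1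
    hg0sq hg1sq hgg0 (by rw [← hBdef]; exact hggB) hsum2 hs2 hT1b hT2b hηa

end CompAux

/-- **Lemma 4.1**: on a bounded domain `Ω ⊆ B_R`, for `F⃗ ∈ C¹(Ω)` with components
bounded by `M₀` and first partials bounded by `M₁`, there are constants `κ, κ' > 0`
(depending only on `ε₀, R, M₀, M₁`) such that for all `0 < ε ≤ ε₀` the functions
`w = e^{x₁+κR} + e^{x₂+κR}` and `w' = −e^{x₁+κ'R} − e^{x₂+κ'R}` satisfy
`Q_ε w > 0` and `Q_ε w' < 0` on `Ω`. -/
theorem exists_comparison_functions {m : ℕ} (hm : 2 ≤ m)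
    (R ε₀ M₀ M₁ : ℝ) (hR : 0 < R) (hε₀ : 0 < ε₀) (hM₀ : 0 < M₀) (hM₁ : 0 < M₁) :
    ∃ κ > (0 : ℝ), ∃ κ' > (0 : ℝ),
      ∀ Ω : Set (EuclideanSpace ℝ (Fin m)),
        IsOpen Ω → Ω.Nonempty → IsConnected Ω → Ω ⊆ Metric.ball 0 R →
      ∀ F : EuclideanSpace ℝ (Fin m) → EuclideanSpace ℝ (Fin m),
        ContDiffOn ℝ 1 F Ω →
        (∀ x ∈ Ω, ∀ i, |F x i| ≤ M₀) →
        (∀ x ∈ Ω, ∀ i j, |fderiv ℝ (fun y => F y i) x (EuclideanSpace.single j 1)| ≤ M₁) →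
      ∀ ε : ℝ, 0 < ε → ε ≤ ε₀ → ∀ x ∈ Ω,
        0 < Qeps ε F
              (fun y => Real.exp (y ⟨0, by omega⟩ + κ * R) +
                Real.exp (y ⟨1, by omega⟩ + κ * R)) x ∧
        Qeps ε F
              (fun y => -Real.exp (y ⟨0, by omega⟩ + κ' * R) -
                Real.exp (y ⟨1, by omega⟩ + κ' * R)) x < 0 := by
  set C : ℝ := max (max 1 (2 * M₀))
    (4 * m * M₁ * ε₀ ^ 2 + 16 * (m : ℝ) ^ 2 * M₁ * (Real.exp (2*R) * Real.exp (2*R)) + 1)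
    with hCdef
  have hC1 : (1:ℝ) ≤ C := le_trans (le_max_left _ _) (le_max_left _ _)
  have hC2 : 2 * M₀ ≤ C := le_trans (le_max_right _ _) (le_max_left _ _)
  have hC3 : 4 * m * M₁ * ε₀ ^ 2 + 16 * (m : ℝ) ^ 2 * M₁ * (Real.exp (2*R) * Real.exp (2*R)) + 1
      ≤ C := le_max_right _ _
  have hlog : 0 ≤ Real.log C := Real.log_nonneg hC1
  set κ : ℝ := (R + Real.log C) / R with hκdef
  have hκpos : 0 < κ := div_pos (by linarith) hR
  have hκR : κ * R = R + Real.log C := div_mul_cancel₀ _ hR.ne'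
  refine ⟨κ, hκpos, κ, hκpos, ?_⟩
  intro Ω hΩopen _hne _hconn hΩR F hF hF0 hF1 ε hε hεε₀ x hx
  constructor
  · have h := CompAux.key hm R ε₀ M₀ M₁ hR hε₀ hM₀ hM₁ C hC1 hC2 hC3 Ω hΩopen hΩR
      F hF hF0 hF1 ε hε hεε₀ x hx 1 (Or.inl rfl)
    rw [show (fun y : EuclideanSpace ℝ (Fin m) =>
          Real.exp (y ⟨0, by omega⟩ + κ * R) + Real.exp (y ⟨1, by omega⟩ + κ * R))
        = (fun y : EuclideanSpace ℝ (Fin m) =>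
          (1:ℝ) * Real.exp (y ⟨0, by omega⟩ + (R + Real.log C)) +
          (1:ℝ) * Real.exp (y ⟨1, by omega⟩ + (R + Real.log C)))
        from funext fun y => by rw [hκR]; ring]
    linarith [h]
  · have h := CompAux.key hm R ε₀ M₀ M₁ hR hε₀ hM₀ hM₁ C hC1 hC2 hC3 Ω hΩopen hΩR
      F hF hF0 hF1 ε hε hεε₀ x hx (-1) (Or.inr rfl)
    rw [show (fun y : EuclideanSpace ℝ (Fin m) =>
          -Real.exp (y ⟨0, by omega⟩ + κ * R) - Real.exp (y ⟨1, by omega⟩ + κ * R))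
        = (fun y : EuclideanSpace ℝ (Fin m) =>
          (-1:ℝ) * Real.exp (y ⟨0, by omega⟩ + (R + Real.log C)) +
          (-1:ℝ) * Real.exp (y ⟨1, by omega⟩ + (R + Real.log C)))
        from funext fun y => by rw [hκR]; ring]
    linarith [h]
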